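/- The plane curve C₁₂ defined by Z¹² + F₁₂(X,Y) = 0 is smooth: there is no nonzero vector (x,y,z) ∈ ℂ³ at which all three partial derivatives of the polynomial Z¹² + F₁₂(X,Y) vanish simultaneously. -/

import Mathlib

/-!
The derivative in `Z` is `12 Z¹¹`, so a singular point has `z = 0`, and then `(x, y)` is a common
zero of `∂F₁₂/∂X` and `∂F₁₂/∂Y`. These are coprime binary forms of degree 11 (`F₁₂` has no repeated
linear factor), so the ideal they generate contains every monomial of degree 21, in particular
`x²¹` and `y²¹`; an explicit certificate of this membership forces `x = y = 0`.
-/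

noncomputable section
open MvPolynomial

/-- `G = Z¹² + F₁₂(X, Y)` with `X = X 0`, `Y = X 1`, `Z = X 2`. -/
def G12 : MvPolynomial (Fin 3) ℂ :=
  X 2 ^ 12 + X 0 * X 1 * (X 0 ^ 10 + 11 * X 0 ^ 5 * X 1 ^ 5 - X 1 ^ 10)

@[simp]
lemma MvPolynomial.pderiv_ofNat {σ R : Type*} [CommSemiring R] (i : σ) (n : ℕ) [n.AtLeastTwo] :
    pderiv i (ofNat(n) : MvPolynomial σ R) = 0 :=
  (pderiv i).map_natCast n

lemma pderiv_zero_G12 :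
    pderiv 0 G12 = X 1 * (11 * X 0 ^ 10 + 66 * X 0 ^ 5 * X 1 ^ 5 - X 1 ^ 10) := by
  simp only [G12, map_add, map_sub, Derivation.leibniz, Derivation.leibniz_pow, pderiv_X,
    pderiv_ofNat, Pi.single_apply, Fin.reduceEq, if_true, if_false, smul_eq_mul, nsmul_eq_mul]
  push_cast
  ring

lemma pderiv_one_G12 :
    pderiv 1 G12 = X 0 * (X 0 ^ 10 + 66 * X 0 ^ 5 * X 1 ^ 5 - 11 * X 1 ^ 10) := by
  simp only [G12, map_add, map_sub, Derivation.leibniz, Derivation.leibniz_pow, pderiv_X,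
    pderiv_ofNat, Pi.single_apply, Fin.reduceEq, if_true, if_false, smul_eq_mul, nsmul_eq_mul]
  push_cast
  ring

lemma pderiv_two_G12 : pderiv 2 G12 = 12 * X 2 ^ 11 := by
  simp only [G12, map_add, map_sub, Derivation.leibniz, Derivation.leibniz_pow, pderiv_X,
    pderiv_ofNat, Pi.single_apply, Fin.reduceEq, if_true, if_false, smul_eq_mul, nsmul_eq_mul]
  push_cast
  ring

theorem eq_zero_of_partials_F12_eq_zero {K : Type*} [CommRing K] [IsDomain K] [CharZero K]
    {x y : K} (hX : y * (11 * x ^ 10 + 66 * x ^ 5 * y ^ 5 - y ^ 10) = 0)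
    (hY : x * (x ^ 10 + 66 * x ^ 5 * y ^ 5 - 11 * y ^ 10) = 0) : x = 0 ∧ y = 0 := by
  have hx : 7500 * x ^ 21 = 0 := by
    linear_combination (8228 * x * y ^ 9 - 49489 * x ^ 6 * y ^ 4) * hX
      + (7500 * x ^ 10 + 49379 * x ^ 5 * y ^ 5 - 748 * y ^ 10) * hY
  have hy : 7500 * y ^ 21 = 0 := by
    linear_combination (748 * x ^ 10 + 49379 * x ^ 5 * y ^ 5 - 7500 * y ^ 10) * hX
      - (8228 * x ^ 9 * y + 49489 * x ^ 4 * y ^ 6) * hY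
  simp_all

theorem stmt5 :
    ¬ ∃ v : Fin 3 → ℂ, v ≠ 0 ∧ ∀ i : Fin 3, eval v (pderiv i G12) = 0 := by
  rintro ⟨v, hv, h⟩
  have hz : v 2 = 0 := by simpa [pderiv_two_G12] using h 2
  obtain ⟨hx, hy⟩ := eq_zero_of_partials_F12_eq_zero (x := v 0) (y := v 1)
    (by simpa [pderiv_zero_G12] using h 0) (by simpa [pderiv_one_G12] using h 1)
  exact hv (funext fun i => by fin_cases i <;> assumption)
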